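/- In a single-memory HMM, let g(x) = 1(b^T P(M | X_{1:T} = x) ≥ 0) for b ∈ ℝ^{|𝕄|}. Assume stationarity and the relaxed single-memory non-degeneracy condition with recoverable states H*. Let R = {x ∈ X^T : P(X_{1:T} = x) > 0 and there exists i ∈ [T] with supp(P(H_i | X_{−i} = x_{−i})) ⊆ H*}. Then there exist a prompt π ∈ [0,1]^{|𝕄||H|} — defining the modified sequence X̂ of length T+1 with fake token z̃ at position 1 (P(X̂_1 = z̃ | M = m, H_1 = h) = π_{(m,h)}, P(X̂_1 = z | M = m, H_1 = h) = (1 − π_{(m,h)}) P(X_1 = z | M = m, H_1 = h), unchanged emissions for i > 1) and x̂ = (z̃, x) — and attention-head parameters: a key matrix Θ^{(K)} ∈ ℝ^{(|H|+1)×|X|}, a query q ∈ ℝ^{|H|+1}, position embeddings β_1, …, β_{T+1} ∈ ℝ^{|H|+1}, value parameters Θ^{(V)} ∈ ℝ^{|𝕄||H|×|X|} and u ∈ ℝ^{|𝕄||H|}, and token embeddings e(z) ∈ ℝ^{|𝕄||H|} with e(z)_{(m,h)} = W_{z,(m,h)}, such that for all x ∈ R: g(x) = 1( (1/|I|) Σ_{i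 ∈ I} u^T ((Θ^{(V)} Ĝ_i(x)) ⊙ ê_i(x)) ≥ 0 ), where Ĝ_i(x) = W v_i(x) with (v_i(x))_{(m,h)} = P(M = m, H_i = h | X̂_{−i} = x̂_{−i}) (and Ĝ_i(x) = 0 when P(X̂_{−i} = x̂_{−i}) = 0), ê_1(x) = π and ê_i(x) = e(x_{i−1}) for i > 1, and I = argmax_{i ∈ [T+1]} { q^T (Θ^{(K)} Ĝ_i(x) + β_i) }. -/

import Mathlib

open scoped Classical
open Matrix

noncomputable section

/-- Forward pass for a Markov chain with transition matrix `A`. -/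
def fwdVec {H : Type*} [Fintype H] (A : Matrix H H ℝ) :
    (H → ℝ) → List (H → ℝ) → (H → ℝ)
  | μ, [] => μ
  | μ, v :: vs => fwdVec A (A.mulVec fun h => μ h * v h) vs

/-- Single-memory HMM, conditioned on `M = m`:
`sJointAt A μ W m x i g = P(H_i = g, X_{−i} = x_{−i} | M = m)`
(hidden chain `H_1, …, H_T`, `P(H_1) = A μ`, emissions `W z m g`). -/
def sJointAt {𝕄 H X : Type*} {T : ℕ} [Fintype H] [DecidableEq H]
    (A : Matrix H H ℝ) (μ : H → ℝ) (W : X → 𝕄 → H → ℝ) (m : 𝕄)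
    (x : Fin T → X) (i : Fin T) (g : H) : ℝ :=
  ∑ h, fwdVec A (A.mulVec μ)
    (List.ofFn fun k : Fin T =>
      if k = i then (fun g' => if g' = g then 1 else 0)
      else fun g' => W (x k) m g') h

/-- `sZ … x i = P(X_{−i} = x_{−i})`. -/
def sZ {𝕄 H X : Type*} {T : ℕ} [Fintype 𝕄] [Fintype H] [DecidableEq H]
    (pM : 𝕄 → ℝ) (A : Matrix H H ℝ) (μ : H → ℝ) (W : X → 𝕄 → H → ℝ)
    (x : Fin T → X) (i : Fin T) : ℝ :=
  ∑ m, pM m * ∑ g, sJointAt A μ W m x i g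

/-- `sPostH … x i g = P(H_i = g | X_{−i} = x_{−i})`. -/
def sPostH {𝕄 H X : Type*} {T : ℕ} [Fintype 𝕄] [Fintype H] [DecidableEq H]
    (pM : 𝕄 → ℝ) (A : Matrix H H ℝ) (μ : H → ℝ) (W : X → 𝕄 → H → ℝ)
    (x : Fin T → X) (i : Fin T) (g : H) : ℝ :=
  (∑ m, pM m * sJointAt A μ W m x i g) / sZ pM A μ W x i

/-- `sSeqPm … m x = P(X_{1:T} = x | M = m)`. -/
def sSeqPm {𝕄 H X : Type*} {T : ℕ} [Fintype H]
    (A : Matrix H H ℝ) (μ : H → ℝ) (W : X → 𝕄 → H → ℝ) (m : 𝕄)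
    (x : Fin T → X) : ℝ :=
  ∑ h, fwdVec A (A.mulVec μ) (List.ofFn fun k : Fin T => fun g' => W (x k) m g') h

/-- `sSeqP … x = P(X_{1:T} = x)`. -/
def sSeqP {𝕄 H X : Type*} {T : ℕ} [Fintype 𝕄] [Fintype H]
    (pM : 𝕄 → ℝ) (A : Matrix H H ℝ) (μ : H → ℝ) (W : X → 𝕄 → H → ℝ)
    (x : Fin T → X) : ℝ :=
  ∑ m, pM m * sSeqPm A μ W m x

/-- Conditioned on `M = m`, the emission-likelihood vector at position `k`
of the modified sequence `x̂ = (z̃, x_1, …, x_T)` induced by the prompt `π`: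
`P(X̂_1 = z̃ | M = m, H_1 = g) = π (m, g)` and positions `k ≥ 1` emit
`x_k` with the original emissions. -/
def sHatEm {𝕄 H X : Type*} {T : ℕ} (W : X → 𝕄 → H → ℝ) (π : 𝕄 × H → ℝ)
    (m : 𝕄) (x : Fin T → X) (k : Fin (T + 1)) : H → ℝ :=
  if hk : (k : ℕ) = 0 then fun g => π (m, g)
  else fun g => W (x ⟨(k : ℕ) - 1, by have := k.isLt; omega⟩) m g

/-- `sHatJointAt … π m x i g = P(H_i = g, X̂_{−i} = x̂_{−i} | M = m)` for the
modified sequence of length `T+1`. -/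
def sHatJointAt {𝕄 H X : Type*} {T : ℕ} [Fintype H] [DecidableEq H]
    (A : Matrix H H ℝ) (μ : H → ℝ) (W : X → 𝕄 → H → ℝ) (π : 𝕄 × H → ℝ)
    (m : 𝕄) (x : Fin T → X) (i : Fin (T + 1)) (g : H) : ℝ :=
  ∑ h, fwdVec A (A.mulVec μ)
    (List.ofFn fun k : Fin (T + 1) =>
      if k = i then (fun g' => if g' = g then 1 else 0)
      else sHatEm W π m x k) h

/-- `sHatZ … π x i = P(X̂_{−i} = x̂_{−i})`. -/
def sHatZ {𝕄 H X : Type*} {T : ℕ} [Fintype 𝕄] [Fintype H] [DecidableEq H]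
    (pM : 𝕄 → ℝ) (A : Matrix H H ℝ) (μ : H → ℝ) (W : X → 𝕄 → H → ℝ)
    (π : 𝕄 × H → ℝ) (x : Fin T → X) (i : Fin (T + 1)) : ℝ :=
  ∑ m, pM m * ∑ g, sHatJointAt A μ W π m x i g

/-- `sHatG … π x i = Ĝ_i(x) = W v_i(x)` where
`(v_i(x))_{(m,h)} = P(M = m, H_i = h | X̂_{−i} = x̂_{−i})`, and `Ĝ_i(x) = 0`
when `P(X̂_{−i} = x̂_{−i}) = 0`. -/
def sHatG {𝕄 H X : Type*} {T : ℕ} [Fintype 𝕄] [Fintype H] [Fintype X]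
    [DecidableEq H]
    (pM : 𝕄 → ℝ) (A : Matrix H H ℝ) (μ : H → ℝ) (W : X → 𝕄 → H → ℝ)
    (π : 𝕄 × H → ℝ) (x : Fin T → X) (i : Fin (T + 1)) (z : X) : ℝ :=
  if 0 < sHatZ pM A μ W π x i then
    ∑ p : 𝕄 × H, W z p.1 p.2 *
      (pM p.1 * sHatJointAt A μ W π p.1 x i p.2 / sHatZ pM A μ W π x i)
  else 0

/-- The value-embedding sequence: `ê_1(x) = π` and `ê_i(x) = e(x_{i−1})` for
`i > 1`, with token embeddings `e(z)_{(m,h)} = W_{z,(m,h)}`. -/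
def sEvec {𝕄 H X : Type*} {T : ℕ} (W : X → 𝕄 → H → ℝ) (π : 𝕄 × H → ℝ)
    (x : Fin T → X) (i : Fin (T + 1)) : 𝕄 × H → ℝ :=
  if hk : (i : ℕ) = 0 then π
  else fun p => W (x ⟨(i : ℕ) - 1, by have := i.isLt; omega⟩) p.1 p.2

/-!
Take the prompt `π (m, h) = 𝟙(b m ≠ 0)`. Because `P(H_0)` is stationary, the fake first token
kills the memories outside `supp b` and leaves the joint law of every later hidden state with
the other tokens unchanged. Non-degeneracy gives a linear map `κ` on `ℝ^X` sending each emission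
column `W_{(m,h)}`, `b m ≠ 0`, to the unit vector `e_{(m,h)}` if `h ∈ H*` and to `0` otherwise.
The attention score of position `j + 1` is the posterior mass that `κ` recovers: it is at most
`1`, with equality iff the posterior of `H_j` lives on `H*`, which happens at some position since
`x ∈ R`; a large negative position embedding excludes the prompt position. At a maximising
position the value `∑_{(m,h)} b m κ(Ĝ)_{(m,h)} W_{x_j,(m,h)}` is `bᵀ P(M, X = x)` divided by
`P(X̂_{−i} = x̂_{−i}) > 0`, so its sign is that of `bᵀ P(M | X = x)`. If that evidence vanishes,
then `P(M = m, X = x) = 0` for all `m ∈ supp b` and both sides are `0`.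
-/

open Submodule Set in
theorem LinearIndependent.exists_linearMap_eq_of_disjoint {K V U ι : Type*} [Field K]
    [AddCommGroup V] [Module K V] [AddCommGroup U] [Module K U] {f : ι → V}
    (hf : LinearIndependent K f) {S : Set V} (hfS : Disjoint (span K (range f)) (span K S))
    (y : ι → U) : ∃ ℓ : V →ₗ[K] U, (∀ i, ℓ (f i) = y i) ∧ ∀ v ∈ S, ℓ v = 0 := by
  have hf' : LinearIndependent K ((span K S).mkQ ∘ f) := hf.map (by rwa [ker_mkQ])
  obtain ⟨g, hg⟩ := LinearMap.exists_extend ((Module.Basis.span hf').constr K y)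
  refine ⟨g ∘ₗ (span K S).mkQ, fun i => ?_, fun v hv => ?_⟩
  · have := congr($hg (Module.Basis.span hf' i))
    rwa [Module.Basis.constr_basis, LinearMap.comp_apply, Module.Basis.span_apply] at this
  · simp [(Submodule.Quotient.mk_eq_zero _).mpr (subset_span hv)]

theorem List.ofFn_ite_eq_set {α : Type*} {n : ℕ} (w : Fin n → α) (i : Fin n) (a : α) :
    (List.ofFn fun k => if k = i then a else w k) = (List.ofFn w).set i a :=
  List.ext_getElem (by simp) fun k _ _ => by
    simp only [List.getElem_ofFn, List.getElem_set, Fin.ext_iff, eq_comm (a := (i : ℕ))]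

section ForwardPass

variable {H : Type*} [Fintype H] (A : Matrix H H ℝ)

theorem mulVec_nonneg_of_nonneg (hA : ∀ g g', 0 ≤ A g' g) {μ : H → ℝ} (hμ : ∀ g, 0 ≤ μ g)
    (h : H) : 0 ≤ (A *ᵥ μ) h :=
  Finset.sum_nonneg fun g _ => mul_nonneg (hA g h) (hμ g)

theorem fwdVec_nonneg (hA : ∀ g g', 0 ≤ A g' g) (L : List (H → ℝ))
    (hL : ∀ v ∈ L, ∀ h, 0 ≤ v h) (μ : H → ℝ) (hμ : ∀ h, 0 ≤ μ h) (h : H) :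
    0 ≤ fwdVec A μ L h := by
  induction L generalizing μ with
  | nil => exact hμ h
  | cons v L ih =>
    exact ih (fun w hw => hL w (List.mem_cons_of_mem _ hw)) _
      (mulVec_nonneg_of_nonneg A hA fun g => mul_nonneg (hμ g) (hL v List.mem_cons_self g))

theorem fwdVec_sum_smul (L : List (H → ℝ)) {ι : Type*} (s : Finset ι) (c : ι → ℝ)
    (μ : ι → H → ℝ) :
    fwdVec A (∑ k ∈ s, c k • μ k) L = ∑ k ∈ s, c k • fwdVec A (μ k) L := by
  induction L generalizing μ with
  | nil => rfl
  | cons v L ih =>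
    have : (fun h => (∑ k ∈ s, c k • μ k) h * v h) = ∑ k ∈ s, c k • fun h => μ k h * v h := by
      ext h; simp [Finset.sum_apply, Finset.sum_mul, mul_assoc]
    simp only [fwdVec, this, mulVec_sum, mulVec_smul, ih]

theorem fwdVec_set_sum_smul (L : List (H → ℝ)) (j : ℕ) (hj : j < L.length) (μ : H → ℝ)
    {ι : Type*} (s : Finset ι) (c : ι → ℝ) (v : ι → H → ℝ) :
    fwdVec A μ (L.set j (∑ k ∈ s, c k • v k)) = ∑ k ∈ s, c k • fwdVec A μ (L.set j (v k)) := by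
  induction L generalizing j μ with
  | nil => simp at hj
  | cons w L ih =>
    cases j with
    | zero =>
      have : (fun h => μ h * (∑ k ∈ s, c k • v k) h) = ∑ k ∈ s, c k • fun h => μ h * v k h := by
        ext h; simp [Finset.sum_apply, Finset.mul_sum, mul_left_comm]
      simp only [List.set_cons_zero, fwdVec, this, mulVec_sum, mulVec_smul, fwdVec_sum_smul]
    | succ j => exact ih j (by simpa using hj) _

end ForwardPass

theorem sEvec_succ {𝕄 H X : Type*} {T : ℕ} (W : X → 𝕄 → H → ℝ) (π : 𝕄 × H → ℝ)
    (x : Fin T → X) (k : Fin T) : sEvec W π x k.succ = fun p => W (x k) p.1 p.2 := by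
  simp [sEvec]

section HiddenMarkov

variable {𝕄 H X : Type*} {T : ℕ} [Fintype H] [DecidableEq H]
  (A : Matrix H H ℝ) (μ : H → ℝ) (W : X → 𝕄 → H → ℝ)

theorem sJointAt_nonneg (hA : ∀ g g', 0 ≤ A g' g) (hμ : ∀ g, 0 ≤ μ g)
    (hW : ∀ z m g, 0 ≤ W z m g) (m : 𝕄) (x : Fin T → X) (i : Fin T) (g : H) :
    0 ≤ sJointAt A μ W m x i g := by
  refine Finset.sum_nonneg fun h _ =>
    fwdVec_nonneg A hA _ ?_ _ (mulVec_nonneg_of_nonneg A hA hμ) h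
  simp only [List.forall_mem_ofFn_iff]
  intro k h'
  split_ifs
  · exact ite_nonneg zero_le_one le_rfl
  · exact hW _ _ _

theorem sHatJointAt_nonneg (hA : ∀ g g', 0 ≤ A g' g) (hμ : ∀ g, 0 ≤ μ g)
    (hW : ∀ z m g, 0 ≤ W z m g) {π : 𝕄 × H → ℝ} (hπ : ∀ p, 0 ≤ π p) (m : 𝕄) (x : Fin T → X)
    (i : Fin (T + 1)) (g : H) :
    0 ≤ sHatJointAt A μ W π m x i g := by
  refine Finset.sum_nonneg fun h _ =>
    fwdVec_nonneg A hA _ ?_ _ (mulVec_nonneg_of_nonneg A hA hμ) h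
  simp only [List.forall_mem_ofFn_iff]
  intro k h'
  split_ifs
  · exact ite_nonneg zero_le_one le_rfl
  · unfold sHatEm
    split_ifs
    exacts [hπ _, hW _ _ _]

theorem sum_emission_mul_sJointAt (m : 𝕄) (x : Fin T → X) (i : Fin T) :
    ∑ g, W (x i) m g * sJointAt A μ W m x i g = sSeqPm A μ W m x := by
  have hrow : (fun g' => W (x i) m g') =
      ∑ g, W (x i) m g • fun g' => if g' = g then 1 else 0 := by
    ext g'; simp
  simp only [sJointAt, List.ofFn_ite_eq_set, Finset.mul_sum]
  rw [Finset.sum_comm, sSeqPm]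
  refine Finset.sum_congr rfl fun h _ => ?_
  rw [← (List.ofFn _).set_getElem_self (i := i) (by simp), List.getElem_ofFn, hrow,
    fwdVec_set_sum_smul A _ _ (by simp)]
  simp [Finset.sum_apply]

theorem mul_sJointAt_eq_zero_of_sPostH_eq_zero [Fintype 𝕄] {pM : 𝕄 → ℝ}
    (hpM : ∀ m, 0 ≤ pM m) (hA : ∀ g g', 0 ≤ A g' g) (hμ : ∀ g, 0 ≤ μ g)
    (hW : ∀ z m g, 0 ≤ W z m g) {x : Fin T → X} {i : Fin T} {g : H}
    (hg : sPostH pM A μ W x i g = 0) (m : 𝕄) : pM m * sJointAt A μ W m x i g = 0 := by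
  have hnn : ∀ m g, 0 ≤ pM m * sJointAt A μ W m x i g := fun m g =>
    mul_nonneg (hpM m) (sJointAt_nonneg A μ W hA hμ hW m x i g)
  rcases div_eq_zero_iff.mp hg with hnum | hZ
  · exact (Finset.sum_eq_zero_iff_of_nonneg fun m _ => hnn m g).mp hnum m (Finset.mem_univ m)
  · simp only [sZ, Finset.mul_sum] at hZ
    rw [Finset.sum_comm] at hZ
    have := (Finset.sum_eq_zero_iff_of_nonneg fun g _ => Finset.sum_nonneg fun m _ => hnn m g).mp
      hZ g (Finset.mem_univ g)
    exact (Finset.sum_eq_zero_iff_of_nonneg fun m _ => hnn m g).mp this m (Finset.mem_univ m)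

/-- The hidden state under the prompt token is again distributed as `A μ = μ`, so the extra position
only contributes the factor `c`. -/
theorem sHatJointAt_succ_of_const (hstat : A *ᵥ μ = μ) {π : 𝕄 × H → ℝ} {m : 𝕄} {c : ℝ}
    (hc : ∀ g, π (m, g) = c) (x : Fin T → X) (j : Fin T) (g : H) :
    sHatJointAt A μ W π m x j.succ g = c * sJointAt A μ W m x j g := by
  have hhead : (A *ᵥ fun h => (A *ᵥ μ) h * π (m, h)) = c • A *ᵥ μ := by
    conv_rhs => rw [← mulVec_smul]
    congr 1; ext h; simp [hc, hstat, mul_comm]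
  have hsmul := fwdVec_sum_smul A
    (List.ofFn fun k : Fin T => if k = j then (fun g' => if g' = g then (1 : ℝ) else 0)
      else fun g' => W (x k) m g') {()} (fun _ => c) (fun _ => A *ᵥ μ)
  simp only [Finset.sum_singleton] at hsmul
  simp [sHatJointAt, sJointAt, List.ofFn_succ, (Fin.succ_ne_zero j).symm, sHatEm, fwdVec, hhead,
    hsmul, Finset.mul_sum]

end HiddenMarkov

section Posterior

variable {𝕄 H X : Type*} {T : ℕ} [Fintype 𝕄] [Fintype H] [DecidableEq H]
  (pM : 𝕄 → ℝ) (A : Matrix H H ℝ) (μ : H → ℝ) (W : X → 𝕄 → H → ℝ)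

/-- The vector `v_i(x)` with `sHatG = W v_i(x)`; like `sHatG`, it is `0` when
`P(X̂_{−i} = x̂_{−i}) = 0` (division by zero). -/
def sHatPost (π : 𝕄 × H → ℝ) (x : Fin T → X) (i : Fin (T + 1)) (p : 𝕄 × H) : ℝ :=
  pM p.1 * sHatJointAt A μ W π p.1 x i p.2 / sHatZ pM A μ W π x i

variable {π : 𝕄 × H → ℝ} {x : Fin T → X} {i : Fin (T + 1)}

theorem sHatZ_eq_sum :
    sHatZ pM A μ W π x i = ∑ p : 𝕄 × H, pM p.1 * sHatJointAt A μ W π p.1 x i p.2 := by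
  simp [sHatZ, Fintype.sum_prod_type, Finset.mul_sum]

theorem sum_sHatPost :
    ∑ p, sHatPost pM A μ W π x i p = sHatZ pM A μ W π x i / sHatZ pM A μ W π x i := by
  simp only [sHatPost, ← Finset.sum_div, ← sHatZ_eq_sum]

theorem sum_sHatPost_le_one : ∑ p, sHatPost pM A μ W π x i p ≤ 1 :=
  sum_sHatPost pM A μ W ▸ div_self_le_one _

theorem sHatZ_nonneg (hw : ∀ p : 𝕄 × H, 0 ≤ pM p.1 * sHatJointAt A μ W π p.1 x i p.2) :
    0 ≤ sHatZ pM A μ W π x i :=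
  sHatZ_eq_sum pM A μ W ▸ Finset.sum_nonneg fun p _ => hw p

theorem sHatPost_nonneg (hw : ∀ p : 𝕄 × H, 0 ≤ pM p.1 * sHatJointAt A μ W π p.1 x i p.2)
    (p : 𝕄 × H) : 0 ≤ sHatPost pM A μ W π x i p :=
  div_nonneg (hw p) (sHatZ_nonneg pM A μ W hw)

theorem sHatPost_le_one (hw : ∀ p : 𝕄 × H, 0 ≤ pM p.1 * sHatJointAt A μ W π p.1 x i p.2)
    (p : 𝕄 × H) : sHatPost pM A μ W π x i p ≤ 1 :=
  (Finset.single_le_sum (fun p _ => sHatPost_nonneg pM A μ W hw p) (Finset.mem_univ p)).trans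
    (sum_sHatPost_le_one pM A μ W)

variable [Fintype X]

theorem sHatG_eq_sum (hw : ∀ p : 𝕄 × H, 0 ≤ pM p.1 * sHatJointAt A μ W π p.1 x i p.2) :
    sHatG pM A μ W π x i = ∑ p, sHatPost pM A μ W π x i p • fun z => W z p.1 p.2 := by
  ext z
  unfold sHatG
  split_ifs with hZ
  · simp [Finset.sum_apply, sHatPost, mul_comm]
  · simp [Finset.sum_apply, sHatPost, le_antisymm (not_lt.mp hZ) (sHatZ_nonneg pM A μ W hw)]

theorem linearMap_sHatG_le (hw : ∀ p : 𝕄 × H, 0 ≤ pM p.1 * sHatJointAt A μ W π p.1 x i p.2)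
    (ℓ : (X → ℝ) →ₗ[ℝ] ℝ) :
    ℓ (sHatG pM A μ W π x i) ≤ ∑ p : 𝕄 × H, |ℓ fun z => W z p.1 p.2| := by
  rw [sHatG_eq_sum pM A μ W hw, map_sum]
  refine Finset.sum_le_sum fun p _ => ?_
  rw [map_smul, smul_eq_mul]
  calc _ ≤ sHatPost pM A μ W π x i p * |ℓ fun z => W z p.1 p.2| :=
        mul_le_mul_of_nonneg_left (le_abs_self _) (sHatPost_nonneg pM A μ W hw p)
    _ ≤ _ := mul_le_of_le_one_left (abs_nonneg _) (sHatPost_le_one pM A μ W hw p)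

end Posterior

def suppPrompt {𝕄 H : Type*} (b : 𝕄 → ℝ) : 𝕄 × H → ℝ := fun p => if b p.1 = 0 then 0 else 1

theorem suppPrompt_nonneg_and_le_one {𝕄 H : Type*} (b : 𝕄 → ℝ) (p : 𝕄 × H) :
    0 ≤ suppPrompt b p ∧ suppPrompt b p ≤ 1 := by
  unfold suppPrompt; split_ifs <;> norm_num

theorem sHatJointAt_succ_suppPrompt {𝕄 H X : Type*} {T : ℕ} [Fintype H] [DecidableEq H]
    {A : Matrix H H ℝ} {μ : H → ℝ} (W : X → 𝕄 → H → ℝ) (b : 𝕄 → ℝ) (x : Fin T → X) (j : Fin T)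
    (hstat : A *ᵥ μ = μ) (m : 𝕄) (g : H) :
    sHatJointAt A μ W (suppPrompt b) m x j.succ g =
      if b m = 0 then 0 else sJointAt A μ W m x j g := by
  split_ifs with hb
  · simpa using sHatJointAt_succ_of_const A μ W hstat (c := 0) (by simp [suppPrompt, hb]) x j g
  · simpa using sHatJointAt_succ_of_const A μ W hstat (c := 1) (by simp [suppPrompt, hb]) x j g

theorem mul_sHatJointAt_suppPrompt_nonneg {𝕄 H X : Type*} {T : ℕ} [Fintype H] [DecidableEq H]
    {pM : 𝕄 → ℝ} {A : Matrix H H ℝ} {μ : H → ℝ} {W : X → 𝕄 → H → ℝ} (b : 𝕄 → ℝ)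
    (hpM : ∀ m, 0 ≤ pM m) (hA : ∀ g g', 0 ≤ A g' g) (hμ : ∀ g, 0 ≤ μ g)
    (hW : ∀ z m g, 0 ≤ W z m g) (x : Fin T → X) (i : Fin (T + 1)) (p : 𝕄 × H) :
    0 ≤ pM p.1 * sHatJointAt A μ W (suppPrompt b) p.1 x i p.2 :=
  mul_nonneg (hpM _) (sHatJointAt_nonneg A μ W hA hμ hW
    (fun p => (suppPrompt_nonneg_and_le_one b p).1) _ x i _)

def recoverablePost {𝕄 H X : Type*} {T : ℕ} [Fintype 𝕄] [Fintype H] [DecidableEq H]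
    (pM : 𝕄 → ℝ) (A : Matrix H H ℝ) (μ : H → ℝ) (W : X → 𝕄 → H → ℝ) (b : 𝕄 → ℝ)
    (Hstar : Finset H) (x : Fin T → X) (j : Fin T) (p : 𝕄 × H) : ℝ :=
  if p.2 ∈ Hstar then sHatPost pM A μ W (suppPrompt b) x j.succ p else 0

section Prompt

variable {𝕄 H X : Type*} {T : ℕ} [Fintype 𝕄] [Fintype H] [DecidableEq H]
  (pM : 𝕄 → ℝ) {A : Matrix H H ℝ} {μ : H → ℝ} (W : X → 𝕄 → H → ℝ) (b : 𝕄 → ℝ)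
  (x : Fin T → X) (j : Fin T)

theorem sHatPost_succ_suppPrompt (hstat : A *ᵥ μ = μ) (p : 𝕄 × H) :
    sHatPost pM A μ W (suppPrompt b) x j.succ p =
      if b p.1 = 0 then 0
      else pM p.1 * sJointAt A μ W p.1 x j p.2 / sHatZ pM A μ W (suppPrompt b) x j.succ := by
  rw [sHatPost, sHatJointAt_succ_suppPrompt W b x j hstat]
  split_ifs <;> simp

theorem sum_mul_sHatPost_succ_suppPrompt (hstat : A *ᵥ μ = μ) :
    ∑ p : 𝕄 × H, b p.1 * (sHatPost pM A μ W (suppPrompt b) x j.succ p * W (x j) p.1 p.2) =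
      (∑ m, b m * (pM m * sSeqPm A μ W m x)) / sHatZ pM A μ W (suppPrompt b) x j.succ := by
  simp only [← sum_emission_mul_sJointAt A μ W _ x j, Fintype.sum_prod_type, Finset.mul_sum,
    Finset.sum_div, sHatPost_succ_suppPrompt pM W b x j hstat]
  refine Finset.sum_congr rfl fun m _ => Finset.sum_congr rfl fun g _ => ?_
  split_ifs with hb
  · simp [hb]
  · ring

theorem mul_sHatPost_succ_suppPrompt_eq_zero (hstat : A *ᵥ μ = μ) (hA : ∀ g g', 0 ≤ A g' g)
    (hμ : ∀ g, 0 ≤ μ g) (hW : ∀ z m g, 0 ≤ W z m g) {p : 𝕄 × H} (hpM : 0 ≤ pM p.1)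
    (hp : b p.1 ≠ 0 → pM p.1 * sSeqPm A μ W p.1 x = 0) :
    b p.1 * (sHatPost pM A μ W (suppPrompt b) x j.succ p * W (x j) p.1 p.2) = 0 := by
  rw [sHatPost_succ_suppPrompt pM W b x j hstat]
  split_ifs with hb
  · simp
  have hJ : ∀ g, 0 ≤ W (x j) p.1 g * sJointAt A μ W p.1 x j g := fun g =>
    mul_nonneg (hW _ _ _) (sJointAt_nonneg A μ W hA hμ hW _ x j g)
  have hterm : pM p.1 * (W (x j) p.1 p.2 * sJointAt A μ W p.1 x j p.2) = 0 := by
    refine le_antisymm ?_ (mul_nonneg hpM (hJ _))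
    rw [← hp hb, ← sum_emission_mul_sJointAt A μ W _ x j]
    exact mul_le_mul_of_nonneg_left
      (Finset.single_le_sum (fun g _ => hJ g) (Finset.mem_univ _)) hpM
  calc _ = b p.1 / sHatZ pM A μ W (suppPrompt b) x j.succ *
        (pM p.1 * (W (x j) p.1 p.2 * sJointAt A μ W p.1 x j p.2)) := by ring
    _ = 0 := by rw [hterm, mul_zero]

theorem mul_sSeqPm_eq_zero_of_sHatZ_succ_eq_zero (hpM : ∀ m, 0 ≤ pM m)
    (hA : ∀ g g', 0 ≤ A g' g) (hμ : ∀ g, 0 ≤ μ g) (hW : ∀ z m g, 0 ≤ W z m g)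
    (hstat : A *ᵥ μ = μ) (hZ : sHatZ pM A μ W (suppPrompt b) x j.succ = 0) {m : 𝕄}
    (hb : b m ≠ 0) : pM m * sSeqPm A μ W m x = 0 := by
  have hnn : ∀ m g, 0 ≤ pM m * sJointAt A μ W m x j g := fun m g =>
    mul_nonneg (hpM m) (sJointAt_nonneg A μ W hA hμ hW m x j g)
  simp only [sHatZ, sHatJointAt_succ_suppPrompt W b x j hstat, Finset.mul_sum] at hZ
  have hm := (Finset.sum_eq_zero_iff_of_nonneg fun m _ => Finset.sum_nonneg fun g _ => by
    split_ifs <;> simp [hnn]).mp hZ m (Finset.mem_univ m)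
  simp only [if_neg hb] at hm
  rw [← sum_emission_mul_sJointAt A μ W m x j, Finset.mul_sum]
  refine Finset.sum_eq_zero fun g _ => ?_
  rw [mul_left_comm, (Finset.sum_eq_zero_iff_of_nonneg fun g _ => hnn m g).mp hm g
    (Finset.mem_univ g), mul_zero]

variable (Hstar : Finset H)

theorem recoverablePost_nonneg_and_le (hw : ∀ p : 𝕄 × H,
      0 ≤ pM p.1 * sHatJointAt A μ W (suppPrompt b) p.1 x j.succ p.2) (p : 𝕄 × H) :
    0 ≤ recoverablePost pM A μ W b Hstar x j p ∧
      recoverablePost pM A μ W b Hstar x j p ≤ sHatPost pM A μ W (suppPrompt b) x j.succ p := by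
  have := sHatPost_nonneg pM A μ W hw p
  unfold recoverablePost
  split_ifs <;> simp [this]

theorem sum_recoverablePost_le_one (hw : ∀ p : 𝕄 × H,
      0 ≤ pM p.1 * sHatJointAt A μ W (suppPrompt b) p.1 x j.succ p.2) :
    ∑ p, recoverablePost pM A μ W b Hstar x j p ≤ 1 :=
  (Finset.sum_le_sum fun p _ => (recoverablePost_nonneg_and_le pM W b x j Hstar hw p).2).trans
    (sum_sHatPost_le_one pM A μ W)

theorem recoverablePost_eq_of_one_le_sum (hw : ∀ p : 𝕄 × H,
      0 ≤ pM p.1 * sHatJointAt A μ W (suppPrompt b) p.1 x j.succ p.2)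
    (h : 1 ≤ ∑ p, recoverablePost pM A μ W b Hstar x j p) :
    0 < sHatZ pM A μ W (suppPrompt b) x j.succ ∧
      ∀ p, recoverablePost pM A μ W b Hstar x j p =
        sHatPost pM A μ W (suppPrompt b) x j.succ p := by
  have hle := fun p (_ : p ∈ Finset.univ) =>
    (recoverablePost_nonneg_and_le pM W b x j Hstar hw p).2
  have hpost := h.trans (Finset.sum_le_sum hle)
  refine ⟨(sHatZ_nonneg pM A μ W hw).lt_of_ne fun hZ => ?_, fun p => ?_⟩
  · rw [sum_sHatPost, ← hZ, div_zero] at hpost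
    norm_num at hpost
  · by_contra hp
    have := Finset.sum_lt_sum hle ⟨p, Finset.mem_univ p, (hle p (Finset.mem_univ p)).lt_of_ne hp⟩
    linarith [sum_sHatPost_le_one pM A μ W (π := suppPrompt b) (x := x) (i := j.succ)]

theorem recoverablePost_eq_sHatPost_of_sPostH (hpM : ∀ m, 0 ≤ pM m) (hA : ∀ g g', 0 ≤ A g' g)
    (hμ : ∀ g, 0 ≤ μ g) (hW : ∀ z m g, 0 ≤ W z m g) (hstat : A *ᵥ μ = μ)
    (hj : ∀ g, g ∉ Hstar → sPostH pM A μ W x j g = 0) (p : 𝕄 × H) :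
    recoverablePost pM A μ W b Hstar x j p = sHatPost pM A μ W (suppPrompt b) x j.succ p := by
  unfold recoverablePost
  split_ifs with hp
  · rfl
  · rw [sHatPost_succ_suppPrompt pM W b x j hstat,
      mul_sJointAt_eq_zero_of_sPostH_eq_zero A μ W hpM hA hμ hW (hj _ hp)]
    simp

end Prompt

section Recovery

variable {𝕄 H X : Type*} [DecidableEq H] (W : X → 𝕄 → H → ℝ) (b : 𝕄 → ℝ) (Hstar : Finset H)

theorem exists_recoveryMap
    (hli : LinearIndependent ℝ
      (fun p : {m : 𝕄 // b m ≠ 0} × {h : H // h ∈ Hstar} => fun z : X => W z p.1.1 p.2.1))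
    (hspan : Submodule.span ℝ
        {f : X → ℝ | ∃ m : 𝕄, ∃ h : H, b m ≠ 0 ∧ h ∈ Hstar ∧ f = fun z => W z m h}
      ⊓ Submodule.span ℝ
        {f : X → ℝ | ∃ m : 𝕄, ∃ h : H, b m ≠ 0 ∧ h ∉ Hstar ∧ f = fun z => W z m h}
      = ⊥) :
    ∃ κ : (X → ℝ) →ₗ[ℝ] 𝕄 × H → ℝ, ∀ m h, b m ≠ 0 →
      κ (fun z => W z m h) = if h ∈ Hstar then Pi.single (m, h) 1 else 0 := by
  have hrange : Set.range (fun p : {m : 𝕄 // b m ≠ 0} × {h : H // h ∈ Hstar} =>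
      fun z : X => W z p.1.1 p.2.1) =
      {f : X → ℝ | ∃ m : 𝕄, ∃ h : H, b m ≠ 0 ∧ h ∈ Hstar ∧ f = fun z => W z m h} := by
    ext f
    constructor
    · rintro ⟨⟨⟨m, hm⟩, ⟨h, hh⟩⟩, rfl⟩
      exact ⟨m, h, hm, hh, rfl⟩
    · rintro ⟨m, h, hm, hh, rfl⟩
      exact ⟨(⟨m, hm⟩, ⟨h, hh⟩), rfl⟩
  obtain ⟨κ, hin, hout⟩ := hli.exists_linearMap_eq_of_disjoint
    (by rwa [disjoint_iff, hrange]) fun p => (Pi.single (p.1.1, p.2.1) 1 : 𝕄 × H → ℝ)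
  refine ⟨κ, fun m h hb => ?_⟩
  split_ifs with hh
  · exact hin (⟨m, hb⟩, ⟨h, hh⟩)
  · exact hout _ ⟨m, h, hb, hh, rfl⟩

theorem recoveryMap_sHatG_succ_suppPrompt [Fintype 𝕄] [Fintype H] [Fintype X] {T : ℕ}
    (pM : 𝕄 → ℝ) {A : Matrix H H ℝ} {μ : H → ℝ} (x : Fin T → X) (j : Fin T)
    (hpM : ∀ m, 0 ≤ pM m) (hA : ∀ g g', 0 ≤ A g' g) (hμ : ∀ g, 0 ≤ μ g)
    (hW : ∀ z m g, 0 ≤ W z m g) (hstat : A *ᵥ μ = μ) (κ : (X → ℝ) →ₗ[ℝ] 𝕄 × H → ℝ)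
    (hκ : ∀ m h, b m ≠ 0 →
      κ (fun z => W z m h) = if h ∈ Hstar then Pi.single (m, h) 1 else 0) :
    κ (sHatG pM A μ W (suppPrompt b) x j.succ) = recoverablePost pM A μ W b Hstar x j := by
  rw [sHatG_eq_sum pM A μ W (mul_sHatJointAt_suppPrompt_nonneg b hpM hA hμ hW x _), map_sum, ← Finset.univ_sum_single (recoverablePost pM A μ W b Hstar x j)]
  refine Finset.sum_congr rfl fun p _ => ?_
  rw [recoverablePost, sHatPost_succ_suppPrompt pM W b x j hstat]
  by_cases hb : b p.1 = 0
  · simp [hb]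
  · rw [map_smul, hκ p.1 p.2 hb]
    split_ifs
    · ext q; simp [Pi.single_apply]
    · simp

end Recovery

section Argmax

def argmaxSet {n : ℕ} (s : Fin n → ℝ) : Finset (Fin n) :=
  Finset.univ.filter fun i => ∀ i', s i' ≤ s i

theorem mem_argmaxSet {n : ℕ} {s : Fin n → ℝ} {i : Fin n} :
    i ∈ argmaxSet s ↔ ∀ i', s i' ≤ s i := by
  simp [argmaxSet]

theorem exists_succ_of_mem_argmaxSet {n : ℕ} {s : Fin (n + 1) → ℝ} {k : Fin (n + 1)}
    (hk : s 0 < s k) {i : Fin (n + 1)} (hi : i ∈ argmaxSet s) : ∃ j : Fin n, i = j.succ := by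
  cases i using Fin.cases with
  | zero => exact absurd (mem_argmaxSet.mp hi k) (not_le.mpr hk)
  | succ j => exact ⟨j, rfl⟩

theorem nonneg_iff_nonneg_mean_of_eq_div {ι : Type*} {I : Finset ι} (hI : I.Nonempty)
    {v Z : ι → ℝ} {τ : ℝ} (hZ : ∀ i ∈ I, 0 < Z i) (hv : ∀ i ∈ I, v i = τ / Z i) :
    0 ≤ τ ↔ 0 ≤ (I.card : ℝ)⁻¹ * ∑ i ∈ I, v i := by
  have hC : 0 < (I.card : ℝ)⁻¹ * ∑ i ∈ I, (Z i)⁻¹ :=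
    mul_pos (inv_pos.mpr (by exact_mod_cast hI.card_pos))
      (Finset.sum_pos (fun i hi => inv_pos.mpr (hZ i hi)) hI)
  rw [Finset.sum_congr rfl hv]
  simp only [div_eq_mul_inv, ← Finset.mul_sum, mul_left_comm _ τ]
  exact (mul_nonneg_iff_of_pos_right hC).symm

end Argmax

section PromptTuning

variable {𝕄 H X : Type*} {T : ℕ} [Fintype 𝕄] [Fintype H] [DecidableEq H]
  (pM : 𝕄 → ℝ) (A : Matrix H H ℝ) (μ : H → ℝ) (W : X → 𝕄 → H → ℝ) (b : 𝕄 → ℝ)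
  (Hstar : Finset H) (x : Fin T → X)

theorem eq_zero_of_sHatZ_succ_suppPrompt_eq_zero (hpM : ∀ m, 0 ≤ pM m)
    (hA : ∀ g g', 0 ≤ A g' g) (hμ : ∀ g, 0 ≤ μ g) (hW : ∀ z m g, 0 ≤ W z m g)
    (hstat : A *ᵥ μ = μ) {i : Fin T} (hZ : sHatZ pM A μ W (suppPrompt b) x i.succ = 0) :
    ∑ m, b m * (pM m * sSeqPm A μ W m x) = 0 ∧
      ∀ j, ∑ p : 𝕄 × H, b p.1 * (recoverablePost pM A μ W b Hstar x j p * W (x j) p.1 p.2) = 0 := by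
  have hP := fun m => mul_sSeqPm_eq_zero_of_sHatZ_succ_eq_zero pM W b x i hpM hA hμ hW hstat hZ
    (m := m)
  refine ⟨Finset.sum_eq_zero fun m _ => ?_, fun j => Finset.sum_eq_zero fun p _ => ?_⟩
  · by_cases hb : b m = 0
    · simp [hb]
    · simp [hP m hb]
  · unfold recoverablePost
    split_ifs
    · exact mul_sHatPost_succ_suppPrompt_eq_zero pM W b x j hstat hA hμ hW (hpM _) (hP p.1)
    · simp

theorem nonneg_posterior_iff_nonneg_argmax_mean (hpM : ∀ m, 0 ≤ pM m)
    (hA : ∀ g g', 0 ≤ A g' g) (hμ : ∀ g, 0 ≤ μ g) (hW : ∀ z m g, 0 ≤ W z m g)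
    (hstat : A *ᵥ μ = μ) (hx : 0 < sSeqP pM A μ W x)
    (hgood : ∃ i, ∀ g, g ∉ Hstar → sPostH pM A μ W x i g = 0) {s v : Fin (T + 1) → ℝ}
    (hs0 : s 0 < 0) (hs : ∀ j, s j.succ = ∑ p, recoverablePost pM A μ W b Hstar x j p)
    (hv : ∀ j, v j.succ =
      ∑ p : 𝕄 × H, b p.1 * (recoverablePost pM A μ W b Hstar x j p * W (x j) p.1 p.2)) :
    0 ≤ ∑ m, b m * (pM m * sSeqPm A μ W m x / sSeqP pM A μ W x) ↔
      0 ≤ ((argmaxSet s).card : ℝ)⁻¹ * ∑ i ∈ argmaxSet s, v i := by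
  obtain ⟨i₀, hi₀⟩ := hgood
  have hw := mul_sHatJointAt_suppPrompt_nonneg b hpM hA hμ hW x
  have hrec₀ := recoverablePost_eq_sHatPost_of_sPostH pM W b x i₀ Hstar hpM hA hμ hW hstat hi₀
  have hsucc : ∀ i ∈ argmaxSet s, ∃ j : Fin T, i = j.succ := fun i =>
    exists_succ_of_mem_argmaxSet <| hs0.trans_le <| (hs i₀).symm ▸ Finset.sum_nonneg
      fun p _ => (recoverablePost_nonneg_and_le pM W b x i₀ Hstar (hw _) p).1
  rw [show ∑ m, b m * (pM m * sSeqPm A μ W m x / sSeqP pM A μ W x) =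
      (∑ m, b m * (pM m * sSeqPm A μ W m x)) / sSeqP pM A μ W x by
    simp [Finset.sum_div, mul_div_assoc], le_div_iff₀ hx, zero_mul]
  rcases (sHatZ_nonneg pM A μ W (hw i₀.succ)).lt_or_eq with hZ | hZ
  · have hs₀ : s i₀.succ = 1 := by
      simp only [hs, hrec₀, sum_sHatPost, div_self hZ.ne']
    refine nonneg_iff_nonneg_mean_of_eq_div ⟨i₀.succ, mem_argmaxSet.mpr fun i' => ?_⟩
      (Z := sHatZ pM A μ W (suppPrompt b) x) ?_ ?_
    · cases i' using Fin.cases with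
      | zero => linarith
      | succ j => exact hs₀ ▸ hs j ▸ sum_recoverablePost_le_one pM W b x j Hstar (hw _)
    all_goals
      intro i hi
      obtain ⟨j, rfl⟩ := hsucc i hi
      obtain ⟨hZj, hrec⟩ := recoverablePost_eq_of_one_le_sum pM W b x j Hstar (hw _)
        (hs j ▸ hs₀ ▸ mem_argmaxSet.mp hi i₀.succ)
    · exact hZj
    · simp only [hv, hrec]
      exact sum_mul_sHatPost_succ_suppPrompt pM W b x j hstat
  · obtain ⟨hτ, hv0⟩ :=
      eq_zero_of_sHatZ_succ_suppPrompt_eq_zero pM A μ W b Hstar x hpM hA hμ hW hstat hZ.symm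
    rw [hτ, Finset.sum_eq_zero fun i hi => by obtain ⟨j, rfl⟩ := hsucc i hi; rw [hv, hv0]]
    simp

end PromptTuning

theorem stmt18_general {𝕄 H X : Type*}
    [Fintype 𝕄] [Fintype H] [Fintype X] [DecidableEq H]
    (pM : 𝕄 → ℝ) (μ : H → ℝ) (A : Matrix H H ℝ) (W : X → 𝕄 → H → ℝ)
    (hpM0 : ∀ m, 0 ≤ pM m)
    (hμ0 : ∀ g, 0 ≤ μ g)
    (hA0 : ∀ g g', 0 ≤ A g' g)
    (hW0 : ∀ z m g, 0 ≤ W z m g)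
    -- stationarity: ergodic chain, full support, `P(H_0) = A P(H_0)`
    (hstat : A.mulVec μ = μ)
    (b : 𝕄 → ℝ)
    -- relaxed single-memory non-degeneracy with `𝕄* = supp(b)` and `H* = Hstar`
    (Hstar : Finset H)
    (hli : LinearIndependent ℝ
      (fun p : {m : 𝕄 // b m ≠ 0} × {h : H // h ∈ Hstar} =>
        fun z : X => W z p.1.1 p.2.1))
    (hspan : Submodule.span ℝ
        {f : X → ℝ | ∃ m : 𝕄, ∃ h : H,
          b m ≠ 0 ∧ h ∈ Hstar ∧ f = fun z => W z m h}
      ⊓ Submodule.span ℝ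
        {f : X → ℝ | ∃ m : 𝕄, ∃ h : H,
          b m ≠ 0 ∧ h ∉ Hstar ∧ f = fun z => W z m h}
      = ⊥)
    (T : ℕ) :
    ∃ π : 𝕄 × H → ℝ, (∀ p, 0 ≤ π p ∧ π p ≤ 1) ∧
    ∃ (ΘK : Matrix (Option H) X ℝ) (q : Option H → ℝ)
      (β : Fin (T + 1) → Option H → ℝ)
      (ΘV : Matrix (𝕄 × H) X ℝ) (u : 𝕄 × H → ℝ),
      ∀ x : Fin T → X,
        -- `x ∈ R`
        0 < sSeqP pM A μ W x →
        (∃ i : Fin T, ∀ g : H, g ∉ Hstar → sPostH pM A μ W x i g = 0) →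
        (0 ≤ ∑ m, b m * (pM m * sSeqPm A μ W m x / sSeqP pM A μ W x)
          ↔ 0 ≤
            ((Finset.univ.filter fun i : Fin (T + 1) => ∀ i' : Fin (T + 1),
                q ⬝ᵥ (ΘK.mulVec (sHatG pM A μ W π x i') + β i')
                  ≤ q ⬝ᵥ (ΘK.mulVec (sHatG pM A μ W π x i) + β i)).card : ℝ)⁻¹ *
              ∑ i ∈ Finset.univ.filter (fun i : Fin (T + 1) => ∀ i' : Fin (T + 1),
                  q ⬝ᵥ (ΘK.mulVec (sHatG pM A μ W π x i') + β i')
                    ≤ q ⬝ᵥ (ΘK.mulVec (sHatG pM A μ W π x i) + β i)),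
                ∑ p : 𝕄 × H, u p *
                  ((ΘV.mulVec (sHatG pM A μ W π x i)) p * sEvec W π x i p)) := by
  obtain ⟨κ, hκ⟩ := exists_recoveryMap W b Hstar hli hspan
  let ℓ : (X → ℝ) →ₗ[ℝ] ℝ := ∑ p, LinearMap.proj p ∘ₗ κ
  set K := ∑ p : 𝕄 × H, |ℓ fun z => W z p.1 p.2| with hK
  refine ⟨suppPrompt b, suppPrompt_nonneg_and_le_one b,
    LinearMap.toMatrix' (LinearMap.pi fun _ => ℓ), Pi.single none 1,
    fun i _ => if i = 0 then -(K + 1) else 0, LinearMap.toMatrix' κ, fun p => b p.1,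
    fun x hx hgood => ?_⟩
  simp only [LinearMap.toMatrix'_mulVec, single_dotProduct, one_mul, Pi.add_apply,
    LinearMap.pi_apply]
  have hrec := fun j =>
    recoveryMap_sHatG_succ_suppPrompt W b Hstar pM x j hpM0 hA0 hμ0 hW0 hstat κ hκ
  refine nonneg_posterior_iff_nonneg_argmax_mean pM A μ W b Hstar x hpM0 hA0 hμ0 hW0 hstat hx hgood
    (s := fun i => ℓ (sHatG pM A μ W (suppPrompt b) x i) + if i = 0 then -(K + 1) else 0)
    (v := fun i => ∑ p : 𝕄 × H, b p.1 *
      (κ (sHatG pM A μ W (suppPrompt b) x i) p * sEvec W (suppPrompt b) x i p)) ?_ ?_ ?_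
  · rw [if_pos rfl]
    linarith [linearMap_sHatG_le pM A μ W
      (mul_sHatJointAt_suppPrompt_nonneg b hpM0 hA0 hμ0 hW0 x 0) ℓ]
  · intro j
    simp [ℓ, hrec, Fin.succ_ne_zero]
  · intro j
    simp only [hrec, sEvec_succ]

theorem stmt18 {𝕄 H X : Type*}
    [Fintype 𝕄] [Fintype H] [Fintype X] [DecidableEq 𝕄] [DecidableEq H]
    (pM : 𝕄 → ℝ) (μ : H → ℝ) (A : Matrix H H ℝ) (W : X → 𝕄 → H → ℝ)
    (hpM0 : ∀ m, 0 ≤ pM m) (hpM1 : ∑ m, pM m = 1)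
    (hμ0 : ∀ g, 0 ≤ μ g) (hμ1 : ∑ g, μ g = 1)
    (hA0 : ∀ g g', 0 ≤ A g' g) (hA1 : ∀ g, ∑ g', A g' g = 1)
    (hW0 : ∀ z m g, 0 ≤ W z m g) (hW1 : ∀ m g, ∑ z, W z m g = 1)
    -- stationarity: ergodic chain, full support, `P(H_0) = A P(H_0)`
    (hErg : ∃ n₀ : ℕ, ∀ n ≥ n₀, ∀ g g' : H, 0 < (A ^ n) g' g)
    (hfull : ∀ g, 0 < μ g)
    (hstat : A.mulVec μ = μ)
    (b : 𝕄 → ℝ)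
    -- relaxed single-memory non-degeneracy with `𝕄* = supp(b)` and `H* = Hstar`
    (Hstar : Finset H)
    (hli : LinearIndependent ℝ
      (fun p : {m : 𝕄 // b m ≠ 0} × {h : H // h ∈ Hstar} =>
        fun z : X => W z p.1.1 p.2.1))
    (hspan : Submodule.span ℝ
        {f : X → ℝ | ∃ m : 𝕄, ∃ h : H,
          b m ≠ 0 ∧ h ∈ Hstar ∧ f = fun z => W z m h}
      ⊓ Submodule.span ℝ
        {f : X → ℝ | ∃ m : 𝕄, ∃ h : H,
          b m ≠ 0 ∧ h ∉ Hstar ∧ f = fun z => W z m h}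
      = ⊥)
    (T : ℕ) :
    ∃ π : 𝕄 × H → ℝ, (∀ p, 0 ≤ π p ∧ π p ≤ 1) ∧
    ∃ (ΘK : Matrix (Option H) X ℝ) (q : Option H → ℝ)
      (β : Fin (T + 1) → Option H → ℝ)
      (ΘV : Matrix (𝕄 × H) X ℝ) (u : 𝕄 × H → ℝ),
      ∀ x : Fin T → X,
        -- `x ∈ R`
        0 < sSeqP pM A μ W x →
        (∃ i : Fin T, ∀ g : H, g ∉ Hstar → sPostH pM A μ W x i g = 0) →
        (0 ≤ ∑ m, b m * (pM m * sSeqPm A μ W m x / sSeqP pM A μ W x)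
          ↔ 0 ≤
            ((Finset.univ.filter fun i : Fin (T + 1) => ∀ i' : Fin (T + 1),
                q ⬝ᵥ (ΘK.mulVec (sHatG pM A μ W π x i') + β i')
                  ≤ q ⬝ᵥ (ΘK.mulVec (sHatG pM A μ W π x i) + β i)).card : ℝ)⁻¹ *
              ∑ i ∈ Finset.univ.filter (fun i : Fin (T + 1) => ∀ i' : Fin (T + 1),
                  q ⬝ᵥ (ΘK.mulVec (sHatG pM A μ W π x i') + β i')
                    ≤ q ⬝ᵥ (ΘK.mulVec (sHatG pM A μ W π x i) + β i)),
                ∑ p : 𝕄 × H, u p *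
                  ((ΘV.mulVec (sHatG pM A μ W π x i)) p * sEvec W π x i p)) :=
  stmt18_general pM μ A W hpM0 hμ0 hA0 hW0 hstat b Hstar hli hspan T

end
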